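/- Converse bound for pure-state entanglement dilution: let |ψ⟩ be a unit vector in ℂ^d ⊗ ℂ^d with reduced state ρ_A := Tr_B |ψ⟩⟨ψ|, let M be a natural number with 1 ≤ M ≤ d, and let |Φ⁺_M⟩ := (1/√M) ∑_{k=1}^M e_k ⊗ e_k. Let (U_j)_{j∈J} be a finite family of d×d unitaries and (K_j)_{j∈J} a family of d×d matrices with ∑_{j∈J} K_jᴴ K_j = I (a Lo–Popescu form of an LOCC map Λ with Λ(X) = ∑_j (U_j ⊗ K_j) X (U_jᴴ ⊗ K_jᴴ)). Then for every γ ∈ ℝ, the fidelity of the dilution protocol satisfies ∑_{j∈J} |⟨ψ| (U_j ⊗ K_j) |Φ⁺_M⟩|² ≤ Tr(ρ_A − 2^{−γ} I)₊ + 2^{−γ} M. -/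

import Mathlib

open Matrix
open scoped ComplexOrder

noncomputable section

/-- Positive part `C₊` of a Hermitian matrix, obtained by applying `x ↦ max x 0` to the
eigenvalues in a spectral decomposition (junk value `0` for non-Hermitian input). -/
def matPos {n : Type*} [Fintype n] [DecidableEq n] (A : Matrix n n ℂ) : Matrix n n ℂ :=
  if hA : A.IsHermitian then
    (hA.eigenvectorUnitary : Matrix n n ℂ) *
      Matrix.diagonal (fun i => ((max (hA.eigenvalues i) 0 : ℝ) : ℂ)) *
      star (hA.eigenvectorUnitary : Matrix n n ℂ)
  else 0

/-- `Tr C₊` as a real number. -/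
def trPos {n : Type*} [Fintype n] [DecidableEq n] (A : Matrix n n ℂ) : ℝ :=
  (matPos A).trace.re

/-- Spectral projection of a Hermitian matrix onto `[0, ∞)` (junk value `0` for
non-Hermitian input). -/
def projNonneg {n : Type*} [Fintype n] [DecidableEq n] (A : Matrix n n ℂ) : Matrix n n ℂ :=
  if hA : A.IsHermitian then
    (hA.eigenvectorUnitary : Matrix n n ℂ) *
      Matrix.diagonal (fun i => if 0 ≤ hA.eigenvalues i then (1 : ℂ) else 0) *
      star (hA.eigenvectorUnitary : Matrix n n ℂ)
  else 0

open Kronecker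

/-- Partial trace over the second (`B`) tensor factor. -/
def trB {dA dB : ℕ} (M : Matrix (Fin dA × Fin dB) (Fin dA × Fin dB) ℂ) :
    Matrix (Fin dA) (Fin dA) ℂ :=
  Matrix.of fun i j => ∑ k, M (i, k) (j, k)

/-- The maximally entangled unit vector `(1/√M) ∑_{k<M} e_k ⊗ e_k` on `ℂ^d ⊗ ℂ^d`. -/
def mesVec (d M : ℕ) : Fin d × Fin d → ℂ :=
  fun x => if (x.1 : ℕ) = (x.2 : ℕ) ∧ (x.1 : ℕ) < M then ((1 / Real.sqrt M : ℝ) : ℂ) else 0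


/-!
Write `ψ` as its `d × d` coefficient matrix `Ψ`, so that `ρ_A = Ψ Ψᴴ`. Each overlap
`⟨ψ|(U ⊗ K)|Φ⁺_M⟩` is `M^{-1/2} ∑_{k<M} ∑_l K_{lk} (Ψᴴ U)_{lk}`, and Cauchy–Schwarz bounds its
square by `M⁻¹` times the product of the sums of the first `M` diagonal entries of `Kᴴ K` and of
`Uᴴ ρ_A U`. With `C = ρ_A - 2^{-γ}`, the latter sum is that of `Uᴴ C U` plus `2^{-γ} M`, and since
`C ≤ C₊` it is at most the full trace of `Uᴴ C₊ U`, i.e. `Tr C₊`. Summed over `j`, the former is `M`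
because `∑ⱼ Kⱼᴴ Kⱼ = 1`.
-/

open Finset

theorem Finset.norm_sum_mul_sq_le {ι R : Type*} [SeminormedRing R] (s : Finset ι)
    (f g : ι → R) :
    ‖∑ i ∈ s, f i * g i‖ ^ 2 ≤ (∑ i ∈ s, ‖f i‖ ^ 2) * ∑ i ∈ s, ‖g i‖ ^ 2 :=
  calc ‖∑ i ∈ s, f i * g i‖ ^ 2 ≤ (∑ i ∈ s, ‖f i‖ * ‖g i‖) ^ 2 := by
        gcongr
        exact (norm_sum_le _ _).trans (sum_le_sum fun i _ => norm_mul_le _ _)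
    _ ≤ _ := sum_mul_sq_le_sq_mul_sq _ _ _

namespace Matrix

variable {m n 𝕜 : Type*} [Fintype m] [RCLike 𝕜]

theorem re_conjTranspose_mul_self_apply_self (A : Matrix m n 𝕜) (k : n) :
    RCLike.re ((Aᴴ * A) k k) = ∑ l, ‖A l k‖ ^ 2 := by
  simp only [mul_apply, conjTranspose_apply, RCLike.star_def, RCLike.conj_mul, map_sum,
    ← RCLike.ofReal_pow, RCLike.ofReal_re]

theorem norm_sum_sum_mul_sq_le (A B : Matrix m n 𝕜) (s : Finset n) :
    ‖∑ k ∈ s, ∑ l, A l k * B l k‖ ^ 2 ≤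
      (∑ k ∈ s, RCLike.re ((Aᴴ * A) k k)) * ∑ k ∈ s, RCLike.re ((Bᴴ * B) k k) := by
  simp only [re_conjTranspose_mul_self_apply_self, ← Finset.sum_product']
  exact norm_sum_mul_sq_le _ _ _

theorem sum_sum_re_diag_eq_card_of_sum_conjTranspose_mul_self_eq_one {J : Type*} [Fintype J]
    [Fintype n] [DecidableEq n] {K : J → Matrix n n 𝕜} (hK : ∑ j, (K j)ᴴ * K j = 1) (s : Finset n) :
    ∑ j, ∑ k ∈ s, RCLike.re (((K j)ᴴ * K j) k k) = #s := by
  rw [sum_comm]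
  simp [← map_sum, ← Matrix.sum_apply, hK]

end Matrix

section PositivePart

variable {n : Type*} [Fintype n] [DecidableEq n]

theorem posSemidef_mul_diagonal_ofReal_mul_star (V : Matrix n n ℂ) {g : n → ℝ} (hg : 0 ≤ g) :
    (V * diagonal (fun i => (g i : ℂ)) * star V).PosSemidef :=
  (posSemidef_diagonal_iff.mpr fun i => Complex.zero_le_real.mpr (hg i)).mul_mul_conjTranspose_same
    V

theorem matPos_posSemidef {C : Matrix n n ℂ} (hC : C.IsHermitian) : (matPos C).PosSemidef := by
  rw [matPos, dif_pos hC]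
  exact posSemidef_mul_diagonal_ofReal_mul_star _ fun i => le_max_right _ _

theorem posSemidef_matPos_sub {C : Matrix n n ℂ} (hC : C.IsHermitian) :
    (matPos C - C).PosSemidef := by
  have hCV := hC.spectral_theorem
  rw [Unitary.conjStarAlgAut_apply] at hCV
  rw [matPos, dif_pos hC]
  generalize (hC.eigenvectorUnitary : Matrix n n ℂ) = V at hCV ⊢
  generalize hC.eigenvalues = ev at hCV ⊢
  subst hCV
  rw [← Matrix.sub_mul, ← Matrix.mul_sub, diagonal_sub]
  convert posSemidef_mul_diagonal_ofReal_mul_star _ (g := fun i => max (ev i) 0 - ev i)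
    fun i => sub_nonneg.mpr (le_max_left _ _) using 3
  simp

theorem sum_re_diag_conj_le_trPos {C : Matrix n n ℂ} (hC : C.IsHermitian) {U : Matrix n n ℂ}
    (hU : U ∈ unitaryGroup n ℂ) (s : Finset n) :
    ∑ k ∈ s, ((Uᴴ * C * U) k k).re ≤ trPos C := by
  have hdiag {A : Matrix n n ℂ} (hA : A.PosSemidef) (k : n) : 0 ≤ ((Uᴴ * A * U) k k).re :=
    (Complex.nonneg_iff.mp (hA.conjTranspose_mul_mul_same U).diag_nonneg).1
  calc ∑ k ∈ s, ((Uᴴ * C * U) k k).re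
      ≤ ∑ k ∈ s, ((Uᴴ * matPos C * U) k k).re := sum_le_sum fun k _ => by
        have := hdiag (posSemidef_matPos_sub hC) k
        rw [Matrix.mul_sub, Matrix.sub_mul, Matrix.sub_apply, Complex.sub_re] at this
        linarith
    _ ≤ ∑ k, ((Uᴴ * matPos C * U) k k).re :=
        sum_le_sum_of_subset_of_nonneg (subset_univ s) fun k _ _ =>
          hdiag (matPos_posSemidef hC) k
    _ = (Uᴴ * matPos C * U).trace.re := by simp [trace, Complex.re_sum]
    _ = trPos C := by
        rw [trace_mul_cycle, ← star_eq_conjTranspose, mem_unitaryGroup_iff.mp hU, one_mul, trPos]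

theorem sum_re_diag_conj_le_trPos_sub_smul_one {ρ : Matrix n n ℂ} (hρ : ρ.IsHermitian)
    {U : Matrix n n ℂ} (hU : U ∈ unitaryGroup n ℂ) (s : Finset n) (ε : ℝ) :
    ∑ k ∈ s, ((Uᴴ * ρ * U) k k).re ≤ trPos (ρ - ε • (1 : Matrix n n ℂ)) + ε * #s := by
  have hC : (ρ - ε • (1 : Matrix n n ℂ)).IsHermitian :=
    hρ.sub (isHermitian_one.smul (IsSelfAdjoint.all ε))
  have hconj : Uᴴ * ρ * U = Uᴴ * (ρ - ε • (1 : Matrix n n ℂ)) * U + ε • 1 := by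
    rw [Matrix.mul_sub, Matrix.sub_mul, Matrix.mul_smul, Matrix.smul_mul, Matrix.mul_one,
      ← star_eq_conjTranspose, mem_unitaryGroup_iff'.mp hU, sub_add_cancel]
  calc ∑ k ∈ s, ((Uᴴ * ρ * U) k k).re
      = ∑ k ∈ s, ((Uᴴ * (ρ - ε • (1 : Matrix n n ℂ)) * U) k k).re + ε * #s := by
        simp [hconj, sum_add_distrib, mul_comm]
    _ ≤ _ := by gcongr; exact sum_re_diag_conj_le_trPos hC hU s

end PositivePart

theorem trB_vecMulVec_star {dA dB : ℕ} (ψ : Fin dA × Fin dB → ℂ) :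
    trB (vecMulVec ψ (star ψ)) = of (Function.curry ψ) * (of (Function.curry ψ))ᴴ := by
  ext i j
  simp [trB, vecMulVec_apply, mul_apply]

theorem mesVec_eq_vec (d M : ℕ) :
    mesVec d M =
      vec (((1 / √M : ℝ) : ℂ) • diagonal fun k : Fin d => if (k : ℕ) < M then 1 else 0) := by
  ext ⟨i, l⟩
  by_cases h : i = l <;> simp [mesVec, h, Fin.val_eq_val, eq_comm]

theorem star_dotProduct_kronecker_mulVec_mesVec {d : ℕ} (ψ : Fin d × Fin d → ℂ) (M : ℕ)
    (U K : Matrix (Fin d) (Fin d) ℂ) :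
    star ψ ⬝ᵥ ((U ⊗ₖ K) *ᵥ mesVec d M) =
      ((1 / √M : ℝ) : ℂ) * ∑ k ∈ ({k : Fin d | (k : ℕ) < M} : Finset _), ∑ l,
        K l k * ((of (Function.curry ψ))ᴴ * U) l k := by
  conv_lhs => rw [mesVec_eq_vec, kronecker_mulVec_vec,
    show ψ = vec (of (Function.curry ψ))ᵀ from rfl, star_vec_dotProduct_vec, ← trace_transpose]
  simp only [transpose_mul, transpose_transpose, transpose_smul, diagonal_transpose]
  rw [Matrix.mul_assoc, Matrix.mul_assoc, trace_mul_comm, Matrix.smul_mul, Matrix.smul_mul,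
    trace_smul, smul_eq_mul, show (of (Function.curry ψ))ᵀᴴᵀ = (of (Function.curry ψ))ᴴ from rfl,
    Matrix.mul_assoc, Matrix.mul_assoc, trace, sum_filter]
  congr 1
  refine sum_congr rfl fun k _ => ?_
  rw [diag_apply, diagonal_mul, ite_mul, one_mul, zero_mul]
  simp only [mul_apply, transpose_apply]

theorem norm_star_dotProduct_kronecker_mulVec_mesVec_sq_le {d : ℕ} (ψ : Fin d × Fin d → ℂ)
    {M : ℕ} (hMd : M ≤ d) {U : Matrix (Fin d) (Fin d) ℂ} (hU : U ∈ unitaryGroup (Fin d) ℂ)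
    (K : Matrix (Fin d) (Fin d) ℂ) (ε : ℝ) :
    ‖star ψ ⬝ᵥ ((U ⊗ₖ K) *ᵥ mesVec d M)‖ ^ 2 ≤
      (trPos (trB (vecMulVec ψ (star ψ)) - ε • (1 : Matrix (Fin d) (Fin d) ℂ)) + ε * M) *
        (1 / M * ∑ k ∈ ({k : Fin d | (k : ℕ) < M} : Finset _), RCLike.re ((Kᴴ * K) k k)) := by
  set Ψ := of (Function.curry ψ)
  set T : Finset (Fin d) := {k | (k : ℕ) < M}
  set B := trPos (trB (vecMulVec ψ (star ψ)) - ε • (1 : Matrix (Fin d) (Fin d) ℂ)) + ε * M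
  have hΨU : ∑ k ∈ T, RCLike.re (((Ψᴴ * U)ᴴ * (Ψᴴ * U)) k k) ≤ B := by
    have hρ : (trB (vecMulVec ψ (star ψ))).IsHermitian :=
      trB_vecMulVec_star ψ ▸ isHermitian_mul_conjTranspose_self Ψ
    have hconj : (Ψᴴ * U)ᴴ * (Ψᴴ * U) = Uᴴ * trB (vecMulVec ψ (star ψ)) * U := by
      simp [trB_vecMulVec_star, Ψ, Matrix.mul_assoc]
    have h := sum_re_diag_conj_le_trPos_sub_smul_one hρ hU T ε
    rw [Fin.card_filter_val_lt, min_eq_right hMd, ← hconj] at h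
    exact h
  have hK : 0 ≤ ∑ k ∈ T, RCLike.re ((Kᴴ * K) k k) := by
    simp only [re_conjTranspose_mul_self_apply_self]; positivity
  have hc : ‖((1 / √M : ℝ) : ℂ)‖ ^ 2 = 1 / M := by simp [Real.sq_sqrt M.cast_nonneg]
  rw [star_dotProduct_kronecker_mulVec_mesVec, norm_mul, mul_pow, hc]
  calc 1 / M * ‖∑ k ∈ T, ∑ l, K l k * (Ψᴴ * U) l k‖ ^ 2
      ≤ 1 / M * ((∑ k ∈ T, RCLike.re ((Kᴴ * K) k k)) * B) := by
        gcongr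
        exact (norm_sum_sum_mul_sq_le _ _ T).trans (by gcongr)
    _ = B * (1 / M * ∑ k ∈ T, RCLike.re ((Kᴴ * K) k k)) := by ring

theorem ed_converse_bound_general {d : ℕ} (ψ : Fin d × Fin d → ℂ)
    (M : ℕ) (hM1 : 1 ≤ M) (hMd : M ≤ d)
    {J : Type} [Fintype J] (U : J → Matrix (Fin d) (Fin d) ℂ)
    (hU : ∀ j, U j ∈ Matrix.unitaryGroup (Fin d) ℂ)
    (K : J → Matrix (Fin d) (Fin d) ℂ)
    (hK : ∑ j, (K j)ᴴ * K j = (1 : Matrix (Fin d) (Fin d) ℂ)) (γ : ℝ) :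
    ∑ j, ‖star ψ ⬝ᵥ ((U j ⊗ₖ K j).mulVec (mesVec d M))‖ ^ 2 ≤
      trPos (trB (Matrix.vecMulVec ψ (star ψ)) -
          (2 : ℝ) ^ (-γ) • (1 : Matrix (Fin d) (Fin d) ℂ)) +
        (2 : ℝ) ^ (-γ) * M := by
  have hM : (M : ℝ) ≠ 0 := Nat.cast_ne_zero.mpr (Nat.one_le_iff_ne_zero.mp hM1)
  refine (sum_le_sum fun j _ =>
    norm_star_dotProduct_kronecker_mulVec_mesVec_sq_le ψ hMd (hU j) (K j) ((2 : ℝ) ^ (-γ))).trans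
      (le_of_eq ?_)
  rw [← mul_sum, ← mul_sum, sum_sum_re_diag_eq_card_of_sum_conjTranspose_mul_self_eq_one hK,
    Fin.card_filter_val_lt, min_eq_right hMd, one_div_mul_cancel hM, mul_one]

/-- Converse bound for pure-state entanglement dilution: for an LOCC map in Lo–Popescu form
`X ↦ ∑ⱼ (Uⱼ ⊗ Kⱼ) X (Uⱼᴴ ⊗ Kⱼᴴ)` and any `γ`, the fidelity of the dilution protocol satisfies
`∑ⱼ |⟨ψ|(Uⱼ ⊗ Kⱼ)|Φ⁺_M⟩|² ≤ Tr(ρ_A − 2^{−γ} 1)₊ + 2^{−γ} M`. -/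
theorem ed_converse_bound {d : ℕ} (ψ : Fin d × Fin d → ℂ)
    (hψ : ∑ x, ‖ψ x‖ ^ 2 = 1)
    (M : ℕ) (hM1 : 1 ≤ M) (hMd : M ≤ d)
    {J : Type} [Fintype J] (U : J → Matrix (Fin d) (Fin d) ℂ)
    (hU : ∀ j, U j ∈ Matrix.unitaryGroup (Fin d) ℂ)
    (K : J → Matrix (Fin d) (Fin d) ℂ)
    (hK : ∑ j, (K j)ᴴ * K j = (1 : Matrix (Fin d) (Fin d) ℂ)) (γ : ℝ) :
    ∑ j, ‖star ψ ⬝ᵥ ((U j ⊗ₖ K j).mulVec (mesVec d M))‖ ^ 2 ≤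
      trPos (trB (Matrix.vecMulVec ψ (star ψ)) -
          (2 : ℝ) ^ (-γ) • (1 : Matrix (Fin d) (Fin d) ℂ)) +
        (2 : ℝ) ^ (-γ) * M :=
  ed_converse_bound_general ψ M hM1 hMd U hU K hK γ
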